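/- Assume (H2): ±i are simple eigenvalues of A, i.e. dim 𝒩(i−A_c) = 1 = codim ℛ(i−A_c) and every nonzero ψ ∈ 𝒩(i−A_c) satisfies ψ ∉ ℛ(i−A_c). Let P ∈ ℒ(V_c) be the projection onto V⋆ along V♯ given by the decomposition V_c = V⋆ ⊕ V♯. Then P A_c ⊆ A_c P (i.e. if φ ∈ 𝒟(A_c) then Pφ ∈ 𝒟(A_c) and P A_c φ = A_c P φ); consequently A_c decomposes as A_c = A⋆ ⊕ A♯ with respect to this splitting. -/

import Mathlib

open Real Filter Set Function MeasureTheory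
open scoped ENNReal

noncomputable section

namespace HopfStmt

/-- The sup part of the periodic Hölder norm. -/
def supN {E : Type*} [NormedAddCommGroup E] (u : ℝ → E) : ℝ := ⨆ t : ℝ, ‖u t‖

/-- The Hölder seminorm part. -/
def holS {E : Type*} [NormedAddCommGroup E] (β : ℝ) (u : ℝ → E) : ℝ :=
  ⨆ p : ℝ × ℝ, ‖u p.1 - u p.2‖ / |p.1 - p.2| ^ β

/-- The norm of `C^β_{2π}(ℝ, E)`. -/
def holderN {E : Type*} [NormedAddCommGroup E] (β : ℝ) (u : ℝ → E) : ℝ :=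
  supN u + holS β u

/-- Membership in `C^β_{2π}(ℝ, E)`: `2π`-periodic and `β`-Hölder continuous. -/
def MemHolder {E : Type*} [NormedAddCommGroup E] (β : ℝ) (u : ℝ → E) : Prop :=
  Function.Periodic u (2 * π) ∧ ∃ C : ℝ, ∀ s t : ℝ, ‖u s - u t‖ ≤ C * |s - t| ^ β

/-- Membership in the span of the first cosine and sine modes: `w = a ⊗ c₁ + b ⊗ s₁`. -/
def memSp1 {E : Type*} [AddCommGroup E] [Module ℝ E] (w : ℝ → E) : Prop :=
  ∃ a b : E, ∀ t : ℝ, w t = Real.cos t • a + Real.sin t • b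

/-- `L₁ ψ := Re (ψ ⊗ e₁)`, i.e. `(L₁ψ)(t) = cos t • ψ₁ - sin t • ψ₂` for `ψ = ψ₁ + iψ₂`. -/
def L1 {E : Type*} [AddCommGroup E] [Module ℝ E] (ψ : E × E) : ℝ → E :=
  fun t => Real.cos t • ψ.1 - Real.sin t • ψ.2

/-- Multiplication by the complex scalar `c` on the complexification `E_c = E × E`. -/
def csmul {E : Type*} [AddCommGroup E] [Module ℝ E] (c : ℂ) (x : E × E) : E × E :=
  (c.re • x.1 - c.im • x.2, c.im • x.1 + c.re • x.2)

/-- Complex conjugation on the complexification. -/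
def conjC {E : Type*} [AddCommGroup E] (x : E × E) : E × E := (x.1, -x.2)

variable {V : Type*} [NormedAddCommGroup V] [NormedSpace ℝ V]
variable {U : Type*} [NormedAddCommGroup U] [NormedSpace ℝ U]

/-- The complexified inclusion `ι_c : U_c → V_c`. -/
def iotaC (ι : U →L[ℝ] V) (ψ : U × U) : V × V := (ι ψ.1, ι ψ.2)

/-- The complexified operator `A_c : U_c → V_c`. -/
def AcC (A : U →L[ℝ] V) (ψ : U × U) : V × V := (A ψ.1, A ψ.2)

/-- The operator `c - A_c : U_c → V_c` for a complex scalar `c`. -/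
def cMinusA (ι A : U →L[ℝ] V) (c : ℂ) (ψ : U × U) : V × V :=
  csmul c (iotaC ι ψ) - AcC A ψ

/-- The kernel `𝒩(i - A_c) ⊆ U_c`. -/
def kerIA (ι A : U →L[ℝ] V) : Set (U × U) := {ψ | cMinusA ι A Complex.I ψ = 0}

/-- The range `ℛ(i - A_c) ⊆ V_c`. -/
def ranIA (ι A : U →L[ℝ] V) : Set (V × V) := Set.range (cMinusA ι A Complex.I)

/-- `V♯ := ℛ(i - A_c) ∩ ℛ(-i - A_c)`. -/
def Vsharp (ι A : U →L[ℝ] V) : Set (V × V) :=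
  Set.range (cMinusA ι A Complex.I) ∩ Set.range (cMinusA ι A (-Complex.I))

/-- The `V`-valued time derivative of `w : ℝ → U` (through the inclusion `ι`). -/
def Xder (ι : U →L[ℝ] V) (w : ℝ → U) : ℝ → V := fun t => deriv (fun s => ι (w s)) t

/-- Membership in `X := C^{1+β}_{2π}(ℝ,V) ∩ C^β_{2π}(ℝ,U)`. -/
def MemX (β : ℝ) (ι : U →L[ℝ] V) (w : ℝ → U) : Prop :=
  MemHolder β w ∧ (∀ t : ℝ, DifferentiableAt ℝ (fun s => ι (w s)) t) ∧
    MemHolder β (Xder ι w)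

/-- The norm of `X`: `‖w‖_X = ‖w‖_{V,1+β} + ‖w‖_{U,β}`. -/
def normX (β : ℝ) (ι : U →L[ℝ] V) (w : ℝ → U) : ℝ :=
  (holderN β (fun t => ι (w t)) + holderN β (Xder ι w)) + holderN β w

/-- `T₁ w := ẇ - A w`. -/
def T1op (ι A : U →L[ℝ] V) (w : ℝ → U) : ℝ → V := fun t => Xder ι w t - A (w t)

/-- Hypothesis (H2): `±i` are simple eigenvalues of `A`, i.e.
`dim 𝒩(i - A_c) = 1 = codim ℛ(i - A_c)` and nonzero kernel elements do not lie in the range. -/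
def H2hyp (ι A : U →L[ℝ] V) : Prop :=
  (∃ ψ ∈ kerIA ι A, ψ ≠ 0 ∧ ∀ φ ∈ kerIA ι A, ∃ c : ℂ, φ = csmul c ψ) ∧
  (∃ χ : V × V, χ ∉ ranIA ι A ∧ ∀ v : V × V, ∃ c : ℂ, ∃ r ∈ ranIA ι A, v = r + csmul c χ) ∧
  (∀ ψ ∈ kerIA ι A, ψ ≠ 0 → iotaC ι ψ ∉ ranIA ι A)

/-- Hypothesis (H4): `ik ∈ ρ(A_c)` for `k ∈ ℤ \ {-1, 1}`. -/
def H4hyp (ι A : U →L[ℝ] V) : Prop :=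
  ∀ k : ℤ, k ≠ 1 → k ≠ -1 → Function.Bijective (cMinusA ι A (Complex.I * (k : ℂ)))

/-- Hypothesis (H5): `‖(in - A_c)⁻¹‖ ≤ M / n` for `n = 2, 3, 4, ...`. -/
def H5hyp (ι A : U →L[ℝ] V) : Prop :=
  ∃ M : ℝ, 0 < M ∧ ∀ n : ℕ, 2 ≤ n →
    ∀ ψ : U × U, (n : ℝ) * ‖iotaC ι ψ‖ ≤ M * ‖cMinusA ι A (Complex.I * (n : ℂ)) ψ‖

/-- Hypothesis (H3): the eigenvalue branch `μ(λ)` of `A_c + (h_u(λ,0))_c` through `μ(0) = i`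
satisfies the transversality condition `Re μ'(0) ≠ 0`. -/
def H3hyp (ι A : U →L[ℝ] V) (h : ℝ → U → V) : Prop :=
  ∃ (ε : ℝ) (μ : ℝ → ℂ) (ψb : ℝ → U × U) (μ' : ℂ), 0 < ε ∧
    μ 0 = Complex.I ∧ ψb 0 ∈ kerIA ι A ∧ ψb 0 ≠ 0 ∧
    ContinuousOn ψb (Metric.ball (0 : ℝ) ε) ∧
    (∀ lam ∈ Metric.ball (0 : ℝ) ε,
      AcC A (ψb lam) + (fderiv ℝ (h lam) 0 (ψb lam).1, fderiv ℝ (h lam) 0 (ψb lam).2)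
        = csmul (μ lam) (iotaC ι (ψb lam))) ∧
    HasDerivAt μ μ' 0 ∧ μ'.re ≠ 0

/-- Unbundled notion: `f : (E, NE) → (F, NF)` is of class `C²` on `D` (Fréchet sense). -/
def UFC2On {E F : Type*} [AddCommGroup E] [Module ℝ E] [AddCommGroup F] [Module ℝ F]
    (NE : E → ℝ) (NF : F → ℝ) (D : Set E) (f : E → F) : Prop :=
  ∃ (D1 : E → E → F) (D2 : E → E → E → F),
    (∀ x ∈ D, IsLinearMap ℝ (D1 x) ∧ ∃ C : ℝ, ∀ e, NF (D1 x e) ≤ C * NE e) ∧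
    (∀ x ∈ D, ∀ ε > (0 : ℝ), ∃ d > (0 : ℝ), ∀ y ∈ D, NE (y - x) < d →
      NF (f y - f x - D1 x (y - x)) ≤ ε * NE (y - x)) ∧
    (∀ x ∈ D, (∀ e, IsLinearMap ℝ (D2 x e)) ∧ (∀ e', IsLinearMap ℝ (fun e => D2 x e e')) ∧
      ∃ C : ℝ, ∀ e e', NF (D2 x e e') ≤ C * NE e * NE e') ∧
    (∀ x ∈ D, ∀ ε > (0 : ℝ), ∃ d > (0 : ℝ), ∀ y ∈ D, NE (y - x) < d →
      ∀ e, NF (D1 y e - D1 x e - D2 x (y - x) e) ≤ ε * NE (y - x) * NE e) ∧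
    (∀ x ∈ D, ∀ ε > (0 : ℝ), ∃ d > (0 : ℝ), ∀ y ∈ D, NE (y - x) < d →
      ∀ e e', NF (D2 y e e' - D2 x e e') ≤ ε * NE e * NE e')

/-- Unbundled notion: `f : ℝ → (E, NE)` is `C¹` on `s` with derivative `f'`. -/
def UC1On {E : Type*} [AddCommGroup E] [Module ℝ E] (NE : E → ℝ) (s : Set ℝ)
    (f f' : ℝ → E) : Prop :=
  (∀ a ∈ s, ∀ ε > (0 : ℝ), ∃ d > (0 : ℝ), ∀ b ∈ s, |b - a| < d →
    NE (f b - f a - (b - a) • f' a) ≤ ε * |b - a|) ∧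
  (∀ a ∈ s, ∀ ε > (0 : ℝ), ∃ d > (0 : ℝ), ∀ b ∈ s, |b - a| < d → NE (f' b - f' a) ≤ ε)


/-!
`P` fixes `V⋆` and annihilates `V♯` because `V⋆ ∩ V♯ = 0`: by (H2) `ψ⋆ ∉ ℛ(i - A_c)`, whereas
`conj ψ⋆ ∈ ℛ(i - A_c)` and `ψ⋆ ∈ ℛ(-i - A_c)`, so both coordinates of an element of `V⋆ ∩ V♯`
vanish (the second one after conjugation). Split `φ = φ⋆ + χ` with `φ⋆ ∈ span_ℂ {ψ⋆, conj ψ⋆}`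
and `ι χ ∈ V♯`. Then `A_c φ⋆ ∈ V⋆` since `ψ⋆` and `conj ψ⋆` are eigenvectors, and `A_c χ ∈ V♯`
since `A_c` commutes with `±i - A_c`; hence `P A_c φ = A_c φ⋆ = A_c P φ`.
-/

section Projection

variable {M : Type*} [AddCommGroup M] {S T : Set M} {P : M → M}

lemma apply_eq_self_of_mem_of_complementary (hPS : ∀ x, P x ∈ S) (hPT : ∀ x, x - P x ∈ T)
    (hST : ∀ x ∈ S, x ∈ T → x = 0) (hS : ∀ x ∈ S, ∀ y ∈ S, x - y ∈ S) {x : M} (hx : x ∈ S) :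
    P x = x :=
  (sub_eq_zero.mp (hST _ (hS x hx _ (hPS x)) (hPT x))).symm

lemma apply_eq_zero_of_mem_of_complementary (hPS : ∀ x, P x ∈ S) (hPT : ∀ x, x - P x ∈ T)
    (hST : ∀ x ∈ S, x ∈ T → x = 0) (hT : ∀ x ∈ T, ∀ y ∈ T, x - y ∈ T) {x : M} (hx : x ∈ T) :
    P x = 0 := by
  refine hST _ (hPS x) ?_
  simpa using hT x hx _ (hPT x)

end Projection

section Complexification

variable {E : Type*} [AddCommGroup E]

lemma conjC_conjC (x : E × E) : conjC (conjC x) = x := by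
  simp [conjC]

lemma conjC_sub (x y : E × E) : conjC (x - y) = conjC x - conjC y :=
  Prod.ext rfl (neg_sub' _ _)

variable [Module ℝ E]

lemma csmul_csmul (c d : ℂ) (x : E × E) : csmul c (csmul d x) = csmul (c * d) x := by
  simp only [csmul, Complex.mul_re, Complex.mul_im, Prod.ext_iff, smul_sub, smul_add, smul_smul,
    sub_smul, add_smul]
  constructor <;> module

lemma csmul_one (x : E × E) : csmul 1 x = x := by
  simp [csmul]

lemma zero_csmul (x : E × E) : csmul 0 x = 0 := by
  simp [csmul, Prod.ext_iff]

lemma csmul_sub (c : ℂ) (x y : E × E) : csmul c (x - y) = csmul c x - csmul c y := by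
  simp only [csmul, Prod.ext_iff, Prod.fst_sub, Prod.snd_sub, smul_sub]
  constructor <;> abel

lemma sub_csmul (c d : ℂ) (x : E × E) : csmul (c - d) x = csmul c x - csmul d x := by
  simp only [csmul, Prod.ext_iff, Prod.fst_sub, Prod.snd_sub, Complex.sub_re, Complex.sub_im,
    sub_smul]
  constructor <;> abel

lemma conjC_csmul (c : ℂ) (x : E × E) :
    conjC (csmul c x) = csmul ((starRingEnd ℂ) c) (conjC x) := by
  simp only [conjC, csmul, Prod.ext_iff, Complex.conj_re, Complex.conj_im, neg_smul, smul_neg]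
  constructor <;> abel

end Complexification

section ComplexifiedOperators

variable (T : U →L[ℝ] V)

lemma iotaC_add (ψ φ : U × U) : iotaC T (ψ + φ) = iotaC T ψ + iotaC T φ := by
  simp [iotaC]

lemma iotaC_sub (ψ φ : U × U) : iotaC T (ψ - φ) = iotaC T ψ - iotaC T φ := by
  simp [iotaC]

lemma iotaC_csmul (c : ℂ) (ψ : U × U) : iotaC T (csmul c ψ) = csmul c (iotaC T ψ) := by
  simp [iotaC, csmul]

lemma iotaC_conjC (ψ : U × U) : iotaC T (conjC ψ) = conjC (iotaC T ψ) := by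
  simp [iotaC, conjC]

lemma AcC_add (ψ φ : U × U) : AcC T (ψ + φ) = AcC T ψ + AcC T φ := by
  simp [AcC]

lemma AcC_sub (ψ φ : U × U) : AcC T (ψ - φ) = AcC T ψ - AcC T φ := by
  simp [AcC]

lemma AcC_csmul (c : ℂ) (ψ : U × U) : AcC T (csmul c ψ) = csmul c (AcC T ψ) := by
  simp [AcC, csmul]

lemma AcC_conjC (ψ : U × U) : AcC T (conjC ψ) = conjC (AcC T ψ) := by
  simp [AcC, conjC]

end ComplexifiedOperators

section Ranges

variable (ι A : U →L[ℝ] V)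

lemma cMinusA_sub (c : ℂ) (ψ φ : U × U) :
    cMinusA ι A c (ψ - φ) = cMinusA ι A c ψ - cMinusA ι A c φ := by
  simp only [cMinusA, iotaC_sub, AcC_sub, csmul_sub]
  abel

lemma cMinusA_csmul (c d : ℂ) (ψ : U × U) :
    cMinusA ι A c (csmul d ψ) = csmul d (cMinusA ι A c ψ) := by
  simp only [cMinusA, iotaC_csmul, AcC_csmul, csmul_csmul, csmul_sub, mul_comm c d]

lemma conjC_cMinusA (c : ℂ) (ψ : U × U) :
    conjC (cMinusA ι A c ψ) = cMinusA ι A ((starRingEnd ℂ) c) (conjC ψ) := by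
  simp only [cMinusA, conjC_sub, conjC_csmul, iotaC_conjC, AcC_conjC]

variable {ι A} {c : ℂ} {x y : V × V}

lemma sub_mem_range_cMinusA (hx : x ∈ range (cMinusA ι A c)) (hy : y ∈ range (cMinusA ι A c)) :
    x - y ∈ range (cMinusA ι A c) := by
  obtain ⟨a, rfl⟩ := hx
  obtain ⟨b, rfl⟩ := hy
  exact ⟨a - b, cMinusA_sub ι A c a b⟩

lemma csmul_mem_range_cMinusA (d : ℂ) (hx : x ∈ range (cMinusA ι A c)) :
    csmul d x ∈ range (cMinusA ι A c) := by
  obtain ⟨a, rfl⟩ := hx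
  exact ⟨csmul d a, cMinusA_csmul ι A c d a⟩

lemma eq_zero_of_csmul_mem_range_cMinusA {d : ℂ} (hx : x ∉ range (cMinusA ι A c))
    (hdx : csmul d x ∈ range (cMinusA ι A c)) : d = 0 := by
  by_contra hd
  have := csmul_mem_range_cMinusA d⁻¹ hdx
  rw [csmul_csmul, inv_mul_cancel₀ hd, csmul_one] at this
  exact hx this

lemma conjC_mem_range_cMinusA (hx : x ∈ range (cMinusA ι A c)) :
    conjC x ∈ range (cMinusA ι A ((starRingEnd ℂ) c)) := by
  obtain ⟨a, rfl⟩ := hx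
  exact ⟨conjC a, (conjC_cMinusA ι A c a).symm⟩

/-- If `(c - A_c) ξ = χ`, then `(c - A_c) (c ξ - χ) = A_c χ`. -/
lemma AcC_mem_range_cMinusA {χ : U × U} (hχ : iotaC ι χ ∈ range (cMinusA ι A c)) :
    AcC A χ ∈ range (cMinusA ι A c) := by
  obtain ⟨ξ, hξ⟩ := hχ
  refine ⟨csmul c ξ - χ, ?_⟩
  rw [cMinusA_sub, cMinusA_csmul, hξ]
  simp only [cMinusA, sub_sub_cancel]

end Ranges

section Eigenvector

variable {ι A : U →L[ℝ] V} {ψ : U × U}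

lemma AcC_eq_of_mem_kerIA (hψ : ψ ∈ kerIA ι A) : AcC A ψ = csmul Complex.I (iotaC ι ψ) :=
  (sub_eq_zero.mp hψ).symm

lemma AcC_conjC_eq_of_mem_kerIA (hψ : ψ ∈ kerIA ι A) :
    AcC A (conjC ψ) = csmul (-Complex.I) (conjC (iotaC ι ψ)) := by
  rw [AcC_conjC, AcC_eq_of_mem_kerIA hψ, conjC_csmul, Complex.conj_I]

/-- `(-i - A_c) ψ = -2i ψ` for an `i`-eigenvector `ψ`. -/
lemma iotaC_mem_range_cMinusA_neg_I (hψ : ψ ∈ kerIA ι A) :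
    iotaC ι ψ ∈ range (cMinusA ι A (-Complex.I)) := by
  refine ⟨csmul (Complex.I / 2) ψ, ?_⟩
  have hψ' : cMinusA ι A (-Complex.I) ψ = csmul (-(2 * Complex.I)) (iotaC ι ψ) := by
    rw [cMinusA, AcC_eq_of_mem_kerIA hψ, ← sub_csmul]
    ring_nf
  rw [cMinusA_csmul, hψ', csmul_csmul]
  convert csmul_one (iotaC ι ψ)
  linear_combination (-1 : ℂ) * Complex.I_mul_I

lemma conjC_iotaC_mem_ranIA (hψ : ψ ∈ kerIA ι A) : conjC (iotaC ι ψ) ∈ ranIA ι A := by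
  have h := conjC_mem_range_cMinusA (iotaC_mem_range_cMinusA_neg_I hψ)
  rwa [map_neg, Complex.conj_I, neg_neg] at h

end Eigenvector

section Splitting

variable {ι A : U →L[ℝ] V}

def Vstar (ι : U →L[ℝ] V) (ψ : U × U) : Set (V × V) :=
  {x | ∃ c d : ℂ, x = csmul c (iotaC ι ψ) + csmul d (conjC (iotaC ι ψ))}

lemma sub_mem_Vstar {ψ : U × U} {x y : V × V} (hx : x ∈ Vstar ι ψ) (hy : y ∈ Vstar ι ψ) :
    x - y ∈ Vstar ι ψ := by
  obtain ⟨a, b, rfl⟩ := hx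
  obtain ⟨c, d, rfl⟩ := hy
  exact ⟨a - c, b - d, by rw [sub_csmul, sub_csmul]; abel⟩

lemma sub_mem_Vsharp {x y : V × V} (hx : x ∈ Vsharp ι A) (hy : y ∈ Vsharp ι A) :
    x - y ∈ Vsharp ι A :=
  ⟨sub_mem_range_cMinusA hx.1 hy.1, sub_mem_range_cMinusA hx.2 hy.2⟩

lemma AcC_mem_Vstar {ψ : U × U} (hψ : ψ ∈ kerIA ι A) (c d : ℂ) :
    AcC A (csmul c ψ + csmul d (conjC ψ)) ∈ Vstar ι ψ :=
  ⟨c * Complex.I, d * -Complex.I, by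
    rw [AcC_add, AcC_csmul, AcC_csmul, AcC_eq_of_mem_kerIA hψ, AcC_conjC_eq_of_mem_kerIA hψ,
      csmul_csmul, csmul_csmul]⟩

lemma AcC_mem_Vsharp {χ : U × U} (hχ : iotaC ι χ ∈ Vsharp ι A) : AcC A χ ∈ Vsharp ι A :=
  ⟨AcC_mem_range_cMinusA hχ.1, AcC_mem_range_cMinusA hχ.2⟩

lemma eq_zero_of_mem_Vstar_of_mem_Vsharp {ψ : U × U} (hψ : ψ ∈ kerIA ι A)
    (hψr : iotaC ι ψ ∉ ranIA ι A) {x : V × V} (hx : x ∈ Vstar ι ψ) (hx' : x ∈ Vsharp ι A) :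
    x = 0 := by
  obtain ⟨c, d, rfl⟩ := hx
  have hc : c = 0 := by
    refine eq_zero_of_csmul_mem_range_cMinusA hψr ?_
    simpa using sub_mem_range_cMinusA hx'.1
      (csmul_mem_range_cMinusA d (conjC_iotaC_mem_ranIA hψ))
  have hd : (starRingEnd ℂ) d = 0 := by
    refine eq_zero_of_csmul_mem_range_cMinusA hψr ?_
    have := conjC_mem_range_cMinusA <| sub_mem_range_cMinusA hx'.2
      (csmul_mem_range_cMinusA c (iotaC_mem_range_cMinusA_neg_I hψ))
    simpa [conjC_csmul, conjC_conjC] using this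
  rw [hc, (map_eq_zero _).mp hd, zero_csmul, zero_csmul, add_zero]

end Splitting

theorem projection_commutes_with_Ac_general
    {V : Type*} [NormedAddCommGroup V] [NormedSpace ℝ V]
    {U : Type*} [NormedAddCommGroup U] [NormedSpace ℝ U]
    (ι A : U →L[ℝ] V)
    (hH2 : H2hyp ι A)
    (ψs : U × U) (hψs : ψs ∈ kerIA ι A) (hψs0 : ψs ≠ 0)
    -- `P ∈ ℒ(V_c)` is complex-linear and projects onto `V⋆` along `V♯`:
    (P : (V × V) →L[ℝ] (V × V))
    (hPstar : ∀ x : V × V, ∃ c d : ℂ,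
      P x = csmul c (iotaC ι ψs) + csmul d (conjC (iotaC ι ψs)))
    (hPsharp : ∀ x : V × V, x - P x ∈ Vsharp ι A) :
    ∀ φ : U × U, ∃ φ' : U × U,
      iotaC ι φ' = P (iotaC ι φ) ∧ P (AcC A φ) = AcC A φ' := by
  have hdisj : ∀ x ∈ Vstar ι ψs, x ∈ Vsharp ι A → x = 0 := fun _ =>
    eq_zero_of_mem_Vstar_of_mem_Vsharp hψs (hH2.2.2 ψs hψs hψs0)
  intro φ
  obtain ⟨c, d, hcd⟩ := hPstar (iotaC ι φ)
  set φs := csmul c ψs + csmul d (conjC ψs)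
  have hιφs : iotaC ι φs = P (iotaC ι φ) := by
    rw [hcd, iotaC_add, iotaC_csmul, iotaC_csmul, iotaC_conjC]
  have hχ : iotaC ι (φ - φs) ∈ Vsharp ι A := by
    rw [iotaC_sub, hιφs]
    exact hPsharp _
  refine ⟨φs, hιφs, ?_⟩
  have hfix := apply_eq_self_of_mem_of_complementary hPstar hPsharp hdisj
    (fun _ hx _ hy => sub_mem_Vstar hx hy) (AcC_mem_Vstar hψs c d)
  have hkill := apply_eq_zero_of_mem_of_complementary hPstar hPsharp hdisj
    (fun _ hx _ hy => sub_mem_Vsharp hx hy) (AcC_mem_Vsharp hχ)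
  calc P (AcC A φ) = P (AcC A φs) + P (AcC A (φ - φs)) := by
        rw [← map_add, ← AcC_add, add_sub_cancel]
    _ = AcC A φs := by rw [hfix, hkill, add_zero]

/-- **Proposition 3.4 (ii).** Assume (H2) and let `P ∈ ℒ(V_c)` be the projection onto
`V⋆ = span_ℂ{ψ⋆, conj ψ⋆}` along `V♯` given by the decomposition `V_c = V⋆ ⊕ V♯`.
Then `P A_c ⊆ A_c P`: if `φ ∈ 𝒟(A_c)` then `Pφ ∈ 𝒟(A_c)` and `P A_c φ = A_c P φ`
(so that `A_c = A⋆ ⊕ A♯` with respect to this splitting). -/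
theorem projection_commutes_with_Ac
    {V : Type*} [NormedAddCommGroup V] [NormedSpace ℝ V] [CompleteSpace V]
    {U : Type*} [NormedAddCommGroup U] [NormedSpace ℝ U] [CompleteSpace U]
    (ι A : U →L[ℝ] V) (hι : Function.Injective ι)
    (hUnorm : ∀ u : U, ‖u‖ = ‖A u‖) (hAbij : Function.Bijective A)
    (hH2 : H2hyp ι A)
    (ψs : U × U) (hψs : ψs ∈ kerIA ι A) (hψs0 : ψs ≠ 0)
    -- `P ∈ ℒ(V_c)` is complex-linear and projects onto `V⋆` along `V♯`:
    (P : (V × V) →L[ℝ] (V × V))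
    (hPc : ∀ (c : ℂ) (x : V × V), P (csmul c x) = csmul c (P x))
    (hPstar : ∀ x : V × V, ∃ c d : ℂ,
      P x = csmul c (iotaC ι ψs) + csmul d (conjC (iotaC ι ψs)))
    (hPsharp : ∀ x : V × V, x - P x ∈ Vsharp ι A) :
    ∀ φ : U × U, ∃ φ' : U × U,
      iotaC ι φ' = P (iotaC ι φ) ∧ P (AcC A φ) = AcC A φ' :=
  projection_commutes_with_Ac_general ι A hH2 ψs hψs hψs0 P hPstar hPsharp

end HopfStmt
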